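/- Let A ∈ ℝ^{m×n} preserve Chebyshev systems, v⁽⁰⁾ ∈ ℝⁿ Chebyshev, and let u⁽ᵏ⁾ = φ(A, v⁽ᵏ⁻¹⁾), v⁽ᵏ⁾ = ψ(A, u⁽ᵏ⁾) for k ≥ 1. Then ‖A - u⁽ᵏ⁾(v⁽ᵏ⁻¹⁾)ᵀ‖_C ≥ ‖A - u⁽ᵏ⁾(v⁽ᵏ⁾)ᵀ‖_C ≥ ‖A - u⁽ᵏ⁺¹⁾(v⁽ᵏ⁾)ᵀ‖_C for all k ≥ 1. -/

import Mathlib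

open Filter

/-- A vector is Chebyshev if all of its components are non-zero. -/
def Cheb {n : ℕ} (v : Fin n → ℝ) : Prop := ∀ i, v i ≠ 0

/-- `mu a v` is the (unique, when `v` is Chebyshev) minimizer of `u ↦ ‖a - u • v‖`,
where `‖·‖` is the sup-norm on `Fin n → ℝ`. -/
noncomputable def mu {n : ℕ} (a v : Fin n → ℝ) : ℝ :=
  Classical.epsilon fun t : ℝ => ∀ u : ℝ, ‖a - t • v‖ ≤ ‖a - u • v‖

noncomputable def phi {m n : ℕ} (A : Fin m → Fin n → ℝ) (v : Fin n → ℝ) : Fin m → ℝ :=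
  fun i => mu (A i) v

noncomputable def psi {m n : ℕ} (A : Fin m → Fin n → ℝ) (u : Fin m → ℝ) : Fin n → ℝ :=
  fun j => mu (fun i => A i j) u

/-- `A` preserves Chebyshev systems. -/
def PreservesCheb {m n : ℕ} (A : Fin m → Fin n → ℝ) : Prop :=
  (∀ v : Fin n → ℝ, Cheb v → Cheb (phi A v)) ∧ (∀ u : Fin m → ℝ, Cheb u → Cheb (psi A u))

/-- A vector is alternance-free if exactly one component attains the max absolute value. -/
def AlternanceFree {n : ℕ} (a : Fin n → ℝ) : Prop := ∃! i, |a i| = ‖a‖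

/-- Chebyshev norm of the residual `A - u vᵀ`. -/
noncomputable def Cerr {m n : ℕ} (A : Fin m → Fin n → ℝ) (u : Fin m → ℝ) (v : Fin n → ℝ) : ℝ :=
  ⨆ i, ⨆ j, |A i j - u i * v j|

/-- Chebyshev norm of a matrix. -/
noncomputable def CnormM {m n : ℕ} (A : Fin m → Fin n → ℝ) : ℝ :=
  ⨆ i, ⨆ j, |A i j|

/-- The sequence `v⁽ᵏ⁾` of the alternating minimization method started at `v0`. -/
noncomputable def vseq {m n : ℕ} (A : Fin m → Fin n → ℝ) (v0 : Fin n → ℝ) : ℕ → Fin n → ℝ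
  | 0 => v0
  | k + 1 => psi A (phi A (vseq A v0 k))

/-! Each half-step of the alternating method minimizes the residual exactly over one factor,
with the other factor fixed, so it cannot increase the Chebyshev norm of the residual.
This only needs `mu a v` to be *some* minimizer, which exists for every `v` because
`t ↦ ‖a - t • v‖` is continuous and coercive on `ℝ`. -/

theorem exists_forall_norm_sub_smul_le {E : Type*} [NormedAddCommGroup E] [NormedSpace ℝ E]
    (a v : E) : ∃ t : ℝ, ∀ u : ℝ, ‖a - t • v‖ ≤ ‖a - u • v‖ := by
  rcases eq_or_ne v 0 with rfl | hv
  · exact ⟨0, fun u => by simp⟩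
  have hcont : Continuous fun t : ℝ => ‖a - t • v‖ := by fun_prop
  have hlower : Tendsto (fun t : ℝ => ‖t‖ * ‖v‖ - ‖a‖) (cocompact ℝ) atTop :=
    tendsto_atTop_add_const_right _ _
      (tendsto_norm_cocompact_atTop.atTop_mul_const (norm_pos_iff.mpr hv))
  have hcoercive : Tendsto (fun t : ℝ => ‖a - t • v‖) (cocompact ℝ) atTop := by
    refine tendsto_atTop_mono (fun t => ?_) hlower
    rw [← norm_smul, norm_sub_rev]
    exact norm_sub_norm_le _ _
  exact hcont.exists_forall_le hcoercive

theorem norm_sub_mu_smul_le {n : ℕ} (a v : Fin n → ℝ) (u : ℝ) :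
    ‖a - mu a v • v‖ ≤ ‖a - u • v‖ :=
  Classical.epsilon_spec (exists_forall_norm_sub_smul_le a v) u

section Cerr

variable {m n : ℕ} (A : Fin m → Fin n → ℝ) (u : Fin m → ℝ) (v : Fin n → ℝ)

theorem Cerr_nonneg : 0 ≤ Cerr A u v :=
  Real.iSup_nonneg fun _ => Real.iSup_nonneg fun _ => abs_nonneg _

theorem abs_sub_le_Cerr (i : Fin m) (j : Fin n) : |A i j - u i * v j| ≤ Cerr A u v :=
  (le_ciSup (Set.finite_range _).bddAbove j).trans
    (le_ciSup (f := fun i => ⨆ j, |A i j - u i * v j|) (Set.finite_range _).bddAbove i)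

variable {A u v} in
theorem Cerr_le {c : ℝ} (hc : 0 ≤ c) (h : ∀ i j, |A i j - u i * v j| ≤ c) : Cerr A u v ≤ c :=
  Real.iSup_le (fun i => Real.iSup_le (h i) hc) hc

theorem Cerr_transpose : Cerr (fun j i => A i j) v u = Cerr A u v :=
  le_antisymm
    (Cerr_le (Cerr_nonneg A u v) fun j i => by simpa [mul_comm] using abs_sub_le_Cerr A u v i j)
    (Cerr_le (Cerr_nonneg _ v u) fun i j => by
      simpa [mul_comm] using abs_sub_le_Cerr (fun j i => A i j) v u j i)

theorem norm_row_sub_smul_le_Cerr (i : Fin m) : ‖A i - u i • v‖ ≤ Cerr A u v :=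
  (pi_norm_le_iff_of_nonneg (Cerr_nonneg A u v)).mpr fun j => abs_sub_le_Cerr A u v i j

theorem Cerr_phi_le : Cerr A (phi A v) v ≤ Cerr A u v :=
  Cerr_le (Cerr_nonneg A u v) fun i j =>
    calc |A i j - phi A v i * v j|
        ≤ ‖A i - phi A v i • v‖ := by simpa using norm_le_pi_norm (A i - phi A v i • v) j
      _ ≤ ‖A i - u i • v‖ := norm_sub_mu_smul_le (A i) v (u i)
      _ ≤ Cerr A u v := norm_row_sub_smul_le_Cerr A u v i

theorem Cerr_psi_le : Cerr A u (psi A u) ≤ Cerr A u v := by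
  rw [← Cerr_transpose, ← Cerr_transpose A u v]
  -- `psi A u` is by definition `phi` of the transpose at `u`
  exact Cerr_phi_le (fun j i => A i j) v u

end Cerr

theorem stmt8_general {m n : ℕ} (A : Fin m → Fin n → ℝ) (v0 : Fin n → ℝ) (k : ℕ) :
    Cerr A (phi A (vseq A v0 k)) (vseq A v0 (k + 1)) ≤
        Cerr A (phi A (vseq A v0 k)) (vseq A v0 k) ∧
      Cerr A (phi A (vseq A v0 (k + 1))) (vseq A v0 (k + 1)) ≤
        Cerr A (phi A (vseq A v0 k)) (vseq A v0 (k + 1)) :=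
  ⟨Cerr_psi_le A _ _, Cerr_phi_le A _ _⟩

theorem stmt8 {m n : ℕ} (hm : 2 ≤ m) (hn : 2 ≤ n) (A : Fin m → Fin n → ℝ)
    (hA : PreservesCheb A) (v0 : Fin n → ℝ) (hv0 : Cheb v0) (k : ℕ) :
    Cerr A (phi A (vseq A v0 k)) (vseq A v0 (k + 1)) ≤
        Cerr A (phi A (vseq A v0 k)) (vseq A v0 k) ∧
      Cerr A (phi A (vseq A v0 (k + 1))) (vseq A v0 (k + 1)) ≤
        Cerr A (phi A (vseq A v0 k)) (vseq A v0 (k + 1)) :=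
  stmt8_general A v0 k
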